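/- Let q ≥ 3 be an odd prime power, write q - 1 = 2^r · p_1^{e_1} ··· p_k^{e_k} with p_1, ..., p_k distinct odd primes and e_i ≥ 1. Let GH_odd be the subgroup of GL_2(F_q) of upper triangular matrices whose lower-right entry is a 2^r-th power in F_q^×, and for each i let GL_2(F_q)^{p_i^{e_i}} be the subgroup of matrices whose determinant is a p_i^{e_i}-th power in F_q^×. Then the normal core in GL_2(F_q) of GH_odd ∩ GL_2(F_q)^{p_1^{e_1}} ∩ ... ∩ GL_2(F_q)^{p_k^{e_k}} is trivial; i.e., the collection {GH_odd, GL_2(F_q)^{p_1^{e_1}}, ..., GL_2(F_q)^{p_k^{e_k}}} is faithful. -/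
import Mathlib



open Matrix

/-- The subgroup `GH_odd` of `GL_2(F)`: upper triangular matrices `[[α,x],[0,β]]`
whose lower-right entry `β` is a `2^r`-th power in `Fˣ`. -/
def GHodd (F : Type) [Field F] [DecidableEq F] (r : ℕ) :
    Subgroup (GL (Fin 2) F) where
  carrier := {g | (g : Matrix (Fin 2) (Fin 2) F) 1 0 = 0 ∧
      ∃ b : Fˣ, ((b ^ 2 ^ r : Fˣ) : F) = (g : Matrix (Fin 2) (Fin 2) F) 1 1}
  one_mem' := by
    refine ⟨Matrix.one_apply_ne (by decide), 1, ?_⟩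
    show ((1 ^ 2 ^ r : Fˣ) : F) = (1 : Matrix (Fin 2) (Fin 2) F) 1 1
    rw [one_pow, Units.val_one, Matrix.one_apply_eq]
  mul_mem' := by
    rintro g h ⟨hg0, b₁, hb₁⟩ ⟨hh0, b₂, hb₂⟩
    have hval : ((g * h : GL (Fin 2) F) : Matrix (Fin 2) (Fin 2) F)
        = (g : Matrix (Fin 2) (Fin 2) F) * (h : Matrix (Fin 2) (Fin 2) F) := rfl
    constructor
    · show ((g * h : GL (Fin 2) F) : Matrix (Fin 2) (Fin 2) F) 1 0 = 0
      rw [hval, Matrix.mul_apply, Fin.sum_univ_two, hg0, hh0, zero_mul, mul_zero,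
        add_zero]
    · refine ⟨b₁ * b₂, ?_⟩
      show _ = ((g * h : GL (Fin 2) F) : Matrix (Fin 2) (Fin 2) F) 1 1
      rw [hval, Matrix.mul_apply, Fin.sum_univ_two, hg0, zero_mul, zero_add,
        mul_pow, Units.val_mul, hb₁, hb₂]
  inv_mem' := by
    rintro g ⟨hg0, b, hb⟩
    have h1 : ((g⁻¹ : GL (Fin 2) F) : Matrix (Fin 2) (Fin 2) F) *
        (g : Matrix (Fin 2) (Fin 2) F) = 1 := by
      have : ((g⁻¹ * g : GL (Fin 2) F) : Matrix (Fin 2) (Fin 2) F) = 1 := by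
        rw [inv_mul_cancel]; rfl
      rw [← this]; rfl
    have hdet : (g : Matrix (Fin 2) (Fin 2) F).det ≠ 0 :=
      ((Matrix.isUnit_iff_isUnit_det _).mp (Units.isUnit g)).ne_zero
    rw [Matrix.det_fin_two, hg0, mul_zero, sub_zero] at hdet
    have hg00 : (g : Matrix (Fin 2) (Fin 2) F) 0 0 ≠ 0 := (mul_ne_zero_iff.mp hdet).1
    have h10 := congrFun (congrFun h1 1) 0
    rw [Matrix.mul_apply, Fin.sum_univ_two, hg0, mul_zero, add_zero,
      Matrix.one_apply_ne (by decide)] at h10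
    have hinv0 : ((g⁻¹ : GL (Fin 2) F) : Matrix (Fin 2) (Fin 2) F) 1 0 = 0 :=
      (mul_eq_zero.mp h10).resolve_right hg00
    have h11 := congrFun (congrFun h1 1) 1
    rw [Matrix.mul_apply, Fin.sum_univ_two, hinv0, zero_mul, zero_add,
      Matrix.one_apply_eq] at h11
    refine ⟨hinv0, b⁻¹, ?_⟩
    rw [inv_pow, Units.val_inv_eq_inv_val, hb]
    exact (eq_inv_of_mul_eq_one_left h11).symm

/-- The subgroup `GL_2(F)^t` of invertible matrices whose determinant is a
`t`-th power in `Fˣ`. -/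
def GLpow (F : Type) [Field F] [DecidableEq F] (t : ℕ) :
    Subgroup (GL (Fin 2) F) :=
  Subgroup.comap (Matrix.GeneralLinearGroup.det : GL (Fin 2) F →* Fˣ)
    (powMonoidHom t : Fˣ →* Fˣ).range

theorem stmt_15 (q : ℕ) (hq3 : 3 ≤ q) (hodd : Odd q) (hq : IsPrimePow q)
    (F : Type) [Field F] [Fintype F] [DecidableEq F] (hF : Fintype.card F = q) :
    (GHodd F ((q - 1).factorization 2) ⊓
      ⨅ p ∈ (q - 1).primeFactors.filter (fun p => p ≠ 2),
        GLpow F (p ^ (q - 1).factorization p)).normalCore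
    = ⊥ := by
  
  classical
  have hn0 : q - 1 ≠ 0 := by omega
  have hcard : Fintype.card Fˣ = q - 1 := by rw [Fintype.card_units, hF]
  set n := q - 1 with hn
  set H := GHodd F (n.factorization 2) ⊓
      ⨅ p ∈ n.primeFactors.filter (fun p => p ≠ 2),
        GLpow F (p ^ n.factorization p) with hH
  rw [eq_bot_iff]
  intro g hg
  rw [Subgroup.mem_bot]
  have hconj : ∀ x : GL (Fin 2) F, x * g * x⁻¹ ∈ H := fun x =>
    Subgroup.normalCore_le H ((Subgroup.normalCore_normal H).conj_mem g hg x)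
  have hgH : g ∈ H := Subgroup.normalCore_le H hg
  -- matrices for conjugation
  have hWm : (!![0,1;1,0] : Matrix (Fin 2) (Fin 2) F) * !![0,1;1,0] = 1 := by
    ext i j
    fin_cases i <;> fin_cases j <;>
      simp [Matrix.mul_apply, Fin.sum_univ_two, Matrix.one_apply]
  set W : GL (Fin 2) F := ⟨!![0,1;1,0], !![0,1;1,0], hWm, hWm⟩ with hWdef
  have hVm1 : (!![1,0;1,1] : Matrix (Fin 2) (Fin 2) F) * !![1,0;-1,1] = 1 := by
    ext i j
    fin_cases i <;> fin_cases j <;>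
      simp [Matrix.mul_apply, Fin.sum_univ_two, Matrix.one_apply]
  have hVm2 : (!![1,0;-1,1] : Matrix (Fin 2) (Fin 2) F) * !![1,0;1,1] = 1 := by
    ext i j
    fin_cases i <;> fin_cases j <;>
      simp [Matrix.mul_apply, Fin.sum_univ_two, Matrix.one_apply]
  set V : GL (Fin 2) F := ⟨!![1,0;1,1], !![1,0;-1,1], hVm1, hVm2⟩ with hVdef
  set A : Matrix (Fin 2) (Fin 2) F := (g : Matrix (Fin 2) (Fin 2) F) with hAdef
  -- g ∈ GHodd
  obtain ⟨hA10, b, hb⟩ := (Subgroup.mem_inf.mp hgH).1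
  -- conjugate by W : A 0 1 = 0
  have hWconj : (W * g * W⁻¹ : GL (Fin 2) F) ∈ GHodd F (n.factorization 2) :=
    (Subgroup.mem_inf.mp (hconj W)).1
  have hWval : ((W * g * W⁻¹ : GL (Fin 2) F) : Matrix (Fin 2) (Fin 2) F)
      = !![0,1;1,0] * A * !![0,1;1,0] := rfl
  have hA01 : A 0 1 = 0 := by
    have h := hWconj.1
    rw [hWval] at h
    simpa [Matrix.mul_apply, Fin.sum_univ_two, Matrix.vecMul, dotProduct,
      Matrix.vecHead, Matrix.vecTail] using h
  -- conjugate by V : A 0 0 = A 1 1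
  have hVconj : (V * g * V⁻¹ : GL (Fin 2) F) ∈ GHodd F (n.factorization 2) :=
    (Subgroup.mem_inf.mp (hconj V)).1
  have hVval : ((V * g * V⁻¹ : GL (Fin 2) F) : Matrix (Fin 2) (Fin 2) F)
      = !![1,0;1,1] * A * !![1,0;-1,1] := rfl
  have hAeq : A 0 0 = A 1 1 := by
    have h := hVconj.1
    rw [hVval] at h
    simp [Matrix.mul_apply, Fin.sum_univ_two, Matrix.vecMul, dotProduct,
      Matrix.vecHead, Matrix.vecTail, show A 1 0 = 0 from hA10, hA01] at h
    linear_combination h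
  -- the scalar
  set u : Fˣ := b ^ 2 ^ n.factorization 2 with hu
  have hu11 : (u : F) = A 1 1 := hb
  have hA10' : A 1 0 = 0 := hA10
  -- determinant
  have hdetu : Matrix.GeneralLinearGroup.det g = u ^ 2 := by
    apply Units.ext
    rw [Matrix.GeneralLinearGroup.val_det_apply]
    show A.det = _
    rw [Matrix.det_fin_two, hA10', hAeq, ← hu11]
    push_cast
    ring
  -- order divisibility facts
  have hun : ∀ x : Fˣ, x ^ n = 1 := by
    intro x; rw [← hcard]; exact pow_card_eq_one
  have hdvd2 : orderOf u ∣ n / 2 ^ n.factorization 2 := by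
    apply orderOf_dvd_of_pow_eq_one
    rw [hu, ← pow_mul, Nat.ordProj_mul_ordCompl_eq_self n 2]
    exact hun b
  have hdvdp : ∀ p ∈ n.primeFactors.filter (fun p => p ≠ 2),
      orderOf u ∣ 2 * (n / p ^ n.factorization p) := by
    intro p hp
    have hgp : g ∈ GLpow F (p ^ n.factorization p) := by
      have := (Subgroup.mem_inf.mp hgH).2
      rw [Subgroup.mem_iInf] at this
      have := this p
      rw [Subgroup.mem_iInf] at this
      exact this hp
    obtain ⟨c, hc⟩ := hgp
    apply orderOf_dvd_of_pow_eq_one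
    rw [pow_mul, ← hdetu, ← hc]
    show (c ^ p ^ n.factorization p) ^ _ = 1
    rw [← pow_mul, Nat.ordProj_mul_ordCompl_eq_self n p]
    exact hun c
  have hdvdn : orderOf u ∣ n := by rw [← hcard]; exact orderOf_dvd_card
  -- conclude orderOf u = 1
  have hord : orderOf u = 1 := by
    rw [Nat.eq_one_iff_not_exists_prime_dvd]
    intro p hp hpd
    have hpn : p ∣ n := hpd.trans hdvdn
    by_cases h2 : p = 2
    · subst h2
      exact Nat.not_dvd_ordCompl Nat.prime_two hn0 (hpd.trans hdvd2)
    · have hmem : p ∈ n.primeFactors.filter (fun p => p ≠ 2) := by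
        rw [Finset.mem_filter, Nat.mem_primeFactors]
        exact ⟨⟨hp, hpn, hn0⟩, h2⟩
      have := hpd.trans (hdvdp p hmem)
      rcases (Nat.Prime.dvd_mul hp).mp this with h | h
      · exact h2 ((Nat.prime_dvd_prime_iff_eq hp Nat.prime_two).mp h)
      · exact Nat.not_dvd_ordCompl hp hn0 h
  have hu1 : u = 1 := orderOf_eq_one_iff.mp hord
  -- finish: g = 1
  apply Units.ext
  show A = 1
  ext i j
  fin_cases i <;> fin_cases j <;>
    simp [hA10', hA01, hAeq, ← hu11, hu1, Matrix.one_apply]
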